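/- Assume the utility u(i, k) is monotonically decreasing in the position k for each item i, and that the ranking scores satisfy |s_i| ≤ C for all items i, where C ≥ 0 and σ > 0. Let C₁ = max{log₂(1 + e^{2σC}), 2} and C₂ = C₁ · ∑_{j=1}^{n} ∑_{i : k(j) < k(i)} (u(j, k(j)) − u(j, k(i))). Then L''(s) ≤ L'(s) + C₂. -/

import Mathlib

/-!
Split `L''` into ordered pairs `k j < k i`: each such pair contributes
`[s i < s j] a + [s j < s i] b` with `a = u i (k j) - u i (k i) ≥ 0` and
`b = u j (k j) - u j (k i) ≥ 0`, while `ΔUtil(i, j) = a - b` and the pair's share of `C₂` is `C₁ b`.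
With `ℓ = log₂(1 + e^{-σ(s i - s j)})`, the scores decide the side of `1` on which `ℓ` lies:
if `s i < s j` then `1 ≤ ℓ ≤ C₁` and `a ≤ a ℓ + (C₁ - ℓ) b`; otherwise `0 ≤ ℓ ≤ 1` and
`b ≤ (C₁ - 1) b ≤ a ℓ + (C₁ - ℓ) b`, using `C₁ ≥ 2`.
-/

open Finset Real

theorem Finset.sum_sum_eq_sum_sum_filter_lt_add {α β M : Type*} [Fintype α] [LinearOrder β]
    [AddCommMonoid M] (key : α → β) (hkey : Function.Injective key) (f : α → α → M)
    (hf : ∀ i, f i i = 0) :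
    ∑ i, ∑ j, f i j = ∑ i, ∑ j ∈ univ.filter (fun j => key j < key i), (f i j + f j i) := by
  have hsplit : ∀ i j, f i j =
      (if key j < key i then f i j else 0) + (if key i < key j then f i j else 0) := by
    intro i j
    rcases lt_trichotomy (key j) (key i) with h | h | h
    · simp [h, h.not_gt]
    · simp [hkey h, hf]
    · simp [h, h.not_gt]
  calc ∑ i, ∑ j, f i j
      = ∑ i, ∑ j, ((if key j < key i then f i j else 0) + (if key i < key j then f i j else 0)) :=
        sum_congr rfl fun i _ => sum_congr rfl fun j _ => hsplit i j
    _ = _ := by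
      simp only [sum_add_distrib, sum_filter]
      rw [sum_comm (f := fun i j => if key i < key j then f i j else 0)]

theorem one_le_logb_two_one_add_exp {x : ℝ} (hx : 0 ≤ x) : 1 ≤ logb 2 (1 + exp x) := by
  rw [le_logb_iff_rpow_le one_lt_two (by positivity), rpow_one]
  linarith [one_le_exp hx]

theorem logb_two_one_add_exp_le_one {x : ℝ} (hx : x ≤ 0) : logb 2 (1 + exp x) ≤ 1 := by
  rw [logb_le_iff_le_rpow one_lt_two (by positivity), rpow_one]
  linarith [exp_le_one_iff.2 hx]

theorem logb_two_one_add_exp_nonneg (x : ℝ) : 0 ≤ logb 2 (1 + exp x) :=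
  logb_nonneg one_lt_two (by linarith [exp_pos x])

theorem logb_two_one_add_exp_mono {x y : ℝ} (hxy : x ≤ y) :
    logb 2 (1 + exp x) ≤ logb 2 (1 + exp y) :=
  logb_le_logb_of_le one_lt_two (by positivity) (by linarith [exp_le_exp.2 hxy])

theorem ite_add_ite_le_logistic_bound {σ C si sj a b : ℝ} (hσ : 0 ≤ σ)
    (hsi : |si| ≤ C) (hsj : |sj| ≤ C) (ha : 0 ≤ a) (hb : 0 ≤ b) :
    (if si < sj then a else 0) + (if sj < si then b else 0) ≤
      (a - b) * logb 2 (1 + exp (-σ * (si - sj))) +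
        max (logb 2 (1 + exp (2 * σ * C))) 2 * b := by
  set ℓ := logb 2 (1 + exp (-σ * (si - sj)))
  set C₁ := max (logb 2 (1 + exp (2 * σ * C))) 2
  have hC₁ : 2 ≤ C₁ := le_max_right _ _
  by_cases h : si < sj
  · have hℓ₁ : 1 ≤ ℓ := one_le_logb_two_one_add_exp (by nlinarith)
    have hℓC₁ : ℓ ≤ C₁ := le_max_of_le_left <| logb_two_one_add_exp_mono <| by
      nlinarith [abs_le.1 hsi, abs_le.1 hsj]
    rw [if_pos h, if_neg h.not_gt, add_zero]
    nlinarith [mul_nonneg ha (sub_nonneg.2 hℓ₁), mul_nonneg hb (sub_nonneg.2 hℓC₁)]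
  · have hℓ₁ : ℓ ≤ 1 := logb_two_one_add_exp_le_one (by nlinarith)
    have hℓ₀ : 0 ≤ ℓ := logb_two_one_add_exp_nonneg _
    have hlhs : (if sj < si then b else 0) ≤ b := by split_ifs <;> linarith
    rw [if_neg h, zero_add]
    nlinarith [mul_nonneg ha hℓ₀, mul_nonneg hb (sub_nonneg.2 hℓ₁)]

theorem urank_Lpp_le_Lp_add_const_general
    {n : ℕ} (u : Fin n → Fin n → ℝ) (hu : ∀ i, Antitone (u i))
    (k : Equiv.Perm (Fin n)) (s : Fin n → ℝ)
    (σ C : ℝ) (hσ : 0 < σ) (hs : ∀ i, |s i| ≤ C) :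
    (∑ i, ∑ j ∈ univ.filter (fun j => s i < s j), |u i (k j) - u i (k i)|) ≤
      (∑ i, ∑ j ∈ univ.filter (fun j => k j < k i),
        (u i (k j) + u j (k i) - u i (k i) - u j (k j)) *
          Real.logb 2 (1 + Real.exp (-σ * (s i - s j))))
      + (max (Real.logb 2 (1 + Real.exp (2 * σ * C))) 2) *
          (∑ j, ∑ i ∈ univ.filter (fun i => k j < k i), (u j (k j) - u j (k i))) := by
  set C₁ := max (logb 2 (1 + exp (2 * σ * C))) 2
  have hC₂ : C₁ * ∑ j, ∑ i ∈ univ.filter (fun i => k j < k i), (u j (k j) - u j (k i)) =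
      ∑ i, ∑ j ∈ univ.filter (fun j => k j < k i), C₁ * (u j (k j) - u j (k i)) := by
    simp only [mul_sum, sum_filter, mul_ite, mul_zero]
    exact sum_comm
  rw [hC₂]
  simp_rw [← sum_add_distrib]
  calc _ = ∑ i, ∑ j, if s i < s j then |u i (k j) - u i (k i)| else 0 := by simp only [sum_filter]
    _ = ∑ i, ∑ j ∈ univ.filter (fun j => k j < k i),
          ((if s i < s j then |u i (k j) - u i (k i)| else 0) +
            (if s j < s i then |u j (k i) - u j (k j)| else 0)) :=
        sum_sum_eq_sum_sum_filter_lt_add k k.injective _ (by simp)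
    _ ≤ _ := by
      refine sum_le_sum fun i _ => sum_le_sum fun j hj => ?_
      have hkji : k j < k i := (mem_filter.1 hj).2
      have ha : 0 ≤ u i (k j) - u i (k i) := sub_nonneg.2 (hu i hkji.le)
      have hb : 0 ≤ u j (k j) - u j (k i) := sub_nonneg.2 (hu j hkji.le)
      rw [abs_of_nonneg ha, abs_sub_comm, abs_of_nonneg hb]
      exact (ite_add_ite_le_logistic_bound hσ.le (hs i) (hs j) ha hb).trans_eq (by ring)

/-- Theorem 1: if the utility `u i k` is antitone in the position `k` and the
ranking scores are bounded by `C`, then `L'' ≤ L' + C₂` where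
`C₂ = C₁ · ∑_j ∑_{i : k j < k i} (u j (k j) − u j (k i))` and
`C₁ = max (log₂(1 + e^(2σC))) 2`. -/
theorem urank_Lpp_le_Lp_add_const
    {n : ℕ} (u : Fin n → Fin n → ℝ) (hu : ∀ i, Antitone (u i))
    (k : Equiv.Perm (Fin n)) (s : Fin n → ℝ)
    (σ C : ℝ) (hσ : 0 < σ) (hC : 0 ≤ C) (hs : ∀ i, |s i| ≤ C) :
    (∑ i, ∑ j ∈ univ.filter (fun j => s i < s j), |u i (k j) - u i (k i)|) ≤
      (∑ i, ∑ j ∈ univ.filter (fun j => k j < k i),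
        (u i (k j) + u j (k i) - u i (k i) - u j (k j)) *
          Real.logb 2 (1 + Real.exp (-σ * (s i - s j))))
      + (max (Real.logb 2 (1 + Real.exp (2 * σ * C))) 2) *
          (∑ j, ∑ i ∈ univ.filter (fun i => k j < k i), (u j (k j) - u j (k i))) :=
  urank_Lpp_le_Lp_add_const_general u hu k s σ C hσ hs
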